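/- arXiv:2311.03285 — 3 statements merged into one kernel-verified Lean document; each statement's English description precedes it below -/
import Mathlib

section
/- Let r : ℝ → ℝ be a reward function that is antitone (non-increasing) and concave. Let a : Fin n → ℝ be the arrival times of n requests, listed in ascending order (a is monotone), and let s : Fin l → ℝ be l strictly increasing service time slots (s is strictly monotone) with l ≤ n, such that every service slot occurs after every arrival (for all k and i, a i ≤ s k). Then for every injective selection σ : Fin l → Fin n of l requests to be served (where the request σ(k) is served at time s k, incurring latency s k − a (σ k)), the total reward ∑_{k} r (s k − a (σ k)) is at most the total reward of serving the most recent l requests in order of arrival, i.e. ∑_{k} r (s k − a ⟨n − l + k⟩). In other words, serving the l most recently arrived requests, in ascending order of their arrival times, maximizes the cumulative reward. -/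
lemma concave_pair {r : ℝ → ℝ} (hr : ConcaveOn ℝ Set.univ r) {x y b c : ℝ}
    (hxy : x ≤ y) (hbc : b ≤ c) :
    r (x - c) + r (y - b) ≤ r (x - b) + r (y - c) := by
  by_cases hD : (c - b) + (y - x) = 0
  · have hb : c = b := by linarith
    have hx : y = x := by linarith
    rw [hb, hx]
  · have hD' : 0 < (c - b) + (y - x) := lt_of_le_of_ne (by linarith) (Ne.symm hD)
    set t : ℝ := (c - b) / ((c - b) + (y - x)) with htdef
    have ht0 : 0 ≤ t := div_nonneg (by linarith) (by linarith)
    have ht1 : t ≤ 1 := by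
      rw [htdef, div_le_one hD']; linarith
    have hts : t * ((c - b) + (y - x)) = c - b := by
      rw [htdef]; field_simp
    have e1 : (1 - t) • (x - c) + t • (y - b) = x - b := by
      simp only [smul_eq_mul]; linear_combination hts
    have e2 : t • (x - c) + (1 - t) • (y - b) = y - c := by
      simp only [smul_eq_mul]; linear_combination -hts
    have h1 := hr.2 (Set.mem_univ (x - c)) (Set.mem_univ (y - b))
      (by linarith : (0:ℝ) ≤ 1 - t) ht0 (by ring)
    have h2 := hr.2 (Set.mem_univ (x - c)) (Set.mem_univ (y - b))
      ht0 (by linarith : (0:ℝ) ≤ 1 - t) (by ring)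
    rw [e1] at h1
    rw [e2] at h2
    simp only [smul_eq_mul] at h1 h2
    nlinarith [h1, h2]

lemma sum_le_sum_two_change {m : ℕ} (F G : Fin m → ℝ) (j t : Fin m) (hjt : j ≠ t)
    (hother : ∀ k, k ≠ j → k ≠ t → F k = G k)
    (hpair : F j + F t ≤ G j + G t) :
    ∑ k, F k ≤ ∑ k, G k := by
  have hjmem : j ∈ Finset.univ := Finset.mem_univ j
  have htmem : t ∈ Finset.univ.erase j := Finset.mem_erase.2 ⟨Ne.symm hjt, Finset.mem_univ t⟩
  rw [← Finset.add_sum_erase _ F hjmem, ← Finset.add_sum_erase _ G hjmem,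
      ← Finset.add_sum_erase _ F htmem, ← Finset.add_sum_erase _ G htmem]
  have : ∑ k ∈ (Finset.univ.erase j).erase t, F k
      = ∑ k ∈ (Finset.univ.erase j).erase t, G k := by
    refine Finset.sum_congr rfl fun k hk => ?_
    simp only [Finset.mem_erase] at hk
    exact hother k hk.2.1 hk.1
  rw [this]
  linarith

lemma admission_aux (r : ℝ → ℝ) (hr_anti : Antitone r) (hr_conc : ConcaveOn ℝ Set.univ r) :
    ∀ (l : ℕ), ∀ (n : ℕ) (hln : l ≤ n) (a : Fin n → ℝ) (_ : Monotone a)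
      (s : Fin l → ℝ) (_ : StrictMono s) (_ : ∀ (i : Fin n) (k : Fin l), a i ≤ s k)
      (σ : Fin l → Fin n) (_ : Function.Injective σ),
      ∑ k : Fin l, r (s k - a (σ k)) ≤
        ∑ k : Fin l, r (s k - a ⟨n - l + (k : ℕ), by omega⟩) := by
  intro l
  induction l with
  | zero => intro n hln a ha s hs has σ hσ; simp
  | succ l IH =>
    intro n hln a ha s hs has σ hσ
    obtain ⟨j, hj⟩ := Finite.exists_max σ
    set t : Fin (l + 1) := Fin.last l with htdef
    set σ' : Fin (l + 1) → Fin n := σ ∘ Equiv.swap j t with hσ'def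
    have hσ' : Function.Injective σ' := hσ.comp (Equiv.swap j t).injective
    have hσ'j : σ' t = σ j := by simp [hσ'def]
    -- step 1 : rearrange so that the max goes to the last slot
    have step1 : ∑ k, r (s k - a (σ k)) ≤ ∑ k, r (s k - a (σ' k)) := by
      by_cases hjt : j = t
      · subst hjt
        simp [hσ'def, Equiv.swap_self]
      · refine sum_le_sum_two_change _ _ j t hjt (fun k hkj hkt => ?_) ?_
        · simp [hσ'def, Equiv.swap_apply_of_ne_of_ne hkj hkt]
        · have hσ'jv : σ' j = σ t := by simp [hσ'def]
          rw [hσ'jv, hσ'j]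
          have hst : s j ≤ s t := hs.monotone (Fin.le_last j)
          have hab : a (σ t) ≤ a (σ j) := ha (hj t)
          exact concave_pair hr_conc hst hab
    refine step1.trans ?_
    -- step 2 : split off the last term and apply IH
    have hn1 : l ≤ n - 1 := by omega
    have hσ'lt : ∀ k : Fin l, (σ' k.castSucc : ℕ) < n - 1 := by
      intro k
      have hne : σ' k.castSucc ≠ σ' t := fun h => by
        have := hσ' h
        exact (Fin.castSucc_lt_last k).ne this
      have hle : σ' k.castSucc ≤ σ j := hj _
      rw [← hσ'j] at hle
      have hlt : σ' k.castSucc < σ' t := lt_of_le_of_ne hle hne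
      have := (σ' t).isLt
      omega
    set a' : Fin (n - 1) → ℝ := fun i => a ⟨i, by omega⟩ with ha'def
    have ha' : Monotone a' := fun i₁ i₂ h => ha (by exact h)
    set s' : Fin l → ℝ := fun k => s k.castSucc with hs'def
    have hs' : StrictMono s' := fun k₁ k₂ h => hs (by exact h)
    set σ'' : Fin l → Fin (n - 1) := fun k => ⟨σ' k.castSucc, hσ'lt k⟩ with hσ''def
    have hσ'' : Function.Injective σ'' := by
      intro k₁ k₂ h
      have : σ' k₁.castSucc = σ' k₂.castSucc := by
        have := congrArg Fin.val h
        simp [hσ''def] at this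
        exact Fin.ext this
      exact Fin.castSucc_injective l (hσ' this)
    have has' : ∀ (i : Fin (n - 1)) (k : Fin l), a' i ≤ s' k := fun i k => has _ _
    have hIH := IH (n - 1) hn1 a' ha' s' hs' has' σ'' hσ''
    rw [Fin.sum_univ_castSucc (fun k : Fin (l+1) => r (s k - a (σ' k))),
        Fin.sum_univ_castSucc (fun k : Fin (l+1) => r (s k - a ⟨n - (l+1) + (k : ℕ), by omega⟩))]
    have hlast : r (s (Fin.last l) - a (σ' (Fin.last l)))
        ≤ r (s (Fin.last l) - a ⟨n - (l+1) + (Fin.last l : ℕ), by omega⟩) := by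
      apply hr_anti
      have : a (σ' (Fin.last l)) ≤ a ⟨n - (l+1) + l, by omega⟩ := by
        apply ha
        have := (σ' (Fin.last l)).isLt
        simp only [Fin.le_def]
        omega
      simp only [Fin.val_last]
      linarith
    refine add_le_add ?_ hlast
    have hLHS : ∀ k : Fin l, r (s' k - a' (σ'' k)) = r (s k.castSucc - a (σ' k.castSucc)) := by
      intro k
      congr 1
    have hRHS : ∀ k : Fin l,
        r (s' k - a' ⟨n - 1 - l + (k : ℕ), by omega⟩)
          = r (s k.castSucc - a ⟨n - (l+1) + (k.castSucc : ℕ), by omega⟩) := by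
      intro k
      congr 2
      · simp [ha'def]
        congr 1
        simp only [Fin.mk.injEq]
        omega
    calc ∑ k : Fin l, r (s k.castSucc - a (σ' k.castSucc))
        = ∑ k : Fin l, r (s' k - a' (σ'' k)) := by
          refine Finset.sum_congr rfl fun k _ => (hLHS k).symm
      _ ≤ ∑ k : Fin l, r (s' k - a' ⟨n - 1 - l + (k : ℕ), by omega⟩) := hIH
      _ = ∑ k : Fin l, r (s k.castSucc - a ⟨n - (l+1) + (k.castSucc : ℕ), by omega⟩) := by
          refine Finset.sum_congr rfl fun k _ => hRHS k

/-- Admission control (Theorem 1 of the paper): with an antitone, concave reward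
function `r`, monotone arrival times `a : Fin n → ℝ`, strictly increasing service
slots `s : Fin l → ℝ` (`l ≤ n`) all occurring after every arrival, every injective
admission strategy `σ : Fin l → Fin n` earns cumulative reward at most that of
serving the `l` most recent requests in order of arrival. -/
theorem admission_control_optimal
    (n l : ℕ) (hln : l ≤ n)
    (r : ℝ → ℝ) (hr_anti : Antitone r) (hr_conc : ConcaveOn ℝ Set.univ r)
    (a : Fin n → ℝ) (ha : Monotone a)
    (s : Fin l → ℝ) (hs : StrictMono s)
    (has : ∀ (i : Fin n) (k : Fin l), a i ≤ s k)
    (σ : Fin l → Fin n) (hσ : Function.Injective σ) :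
    ∑ k : Fin l, r (s k - a (σ k)) ≤
      ∑ k : Fin l, r (s k - a ⟨n - l + (k : ℕ), by omega⟩) := by
  exact admission_aux r hr_anti hr_conc l n hln a ha s hs has σ hσ
end

section
/- Let r : ℝ → ℝ be antitone (non-increasing). Let a : Fin n → ℝ be monotone arrival times and s : Fin l → ℝ service times with l ≤ n and a i ≤ s k for all i, k. Then for every injective σ : Fin l → Fin n there exists an injective σ' : Fin l → Fin n whose range is exactly the set of the l largest indices {i : Fin n | n − l ≤ (i : ℕ)} such that ∑_{k} r (s k − a (σ k)) ≤ ∑_{k} r (s k − a (σ' k)). That is, any admission strategy serving l requests can be replaced, without decreasing the cumulative reward, by a strategy that serves precisely the l most recently arrived requests. -/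
lemma fin_strictMono_le_apply {l n : ℕ} {f : Fin l → Fin n} (hf : StrictMono f)
    (j : Fin l) : (j : ℕ) ≤ (f j : ℕ) := by
  obtain ⟨jv, hjv⟩ := j
  induction jv with
  | zero => exact Nat.zero_le _
  | succ jv ih =>
    have hjv' : jv < l := by omega
    have h := hf (show (⟨jv, hjv'⟩ : Fin l) < ⟨jv + 1, hjv⟩ by exact Nat.lt_succ_self jv)
    have h2 := ih hjv'
    simp only [Fin.val_mk] at h2 h ⊢
    omega

lemma fin_strictMono_apply_le {l n : ℕ} {f : Fin l → Fin n} (hf : StrictMono f)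
    (j : Fin l) : (f j : ℕ) ≤ n - l + j := by
  have hl : 0 < l := j.pos
  set g : Fin l → Fin n := fun i => (f i.rev).rev with hg
  have hgm : StrictMono g := by
    intro i i' h
    simp only [hg]
    exact Fin.rev_lt_rev.mpr (hf (Fin.rev_lt_rev.mpr h))
  have := fin_strictMono_le_apply hgm j.rev
  simp only [hg, Fin.rev_rev, Fin.val_rev] at this
  have hfj := (f j).isLt
  omega

/-- Exchange claim (Appendix B.1): with an antitone reward function `r`, monotone
arrival times `a : Fin n → ℝ`, service times `s : Fin l → ℝ` with `l ≤ n` and all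
arrivals before all service times, any injective admission strategy `σ` can be
replaced by an injective strategy `σ'` whose range is exactly the set of the `l`
most recently arrived requests, without decreasing the cumulative reward. -/
theorem admission_exchange_to_most_recent
    (n l : ℕ) (hln : l ≤ n)
    (r : ℝ → ℝ) (hr_anti : Antitone r)
    (a : Fin n → ℝ) (ha : Monotone a)
    (s : Fin l → ℝ)
    (has : ∀ (i : Fin n) (k : Fin l), a i ≤ s k)
    (σ : Fin l → Fin n) (hσ : Function.Injective σ) :
    ∃ σ' : Fin l → Fin n, Function.Injective σ' ∧
      Set.range σ' = {i : Fin n | n - l ≤ (i : ℕ)} ∧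
      ∑ k : Fin l, r (s k - a (σ k)) ≤ ∑ k : Fin l, r (s k - a (σ' k)) := by
  classical
  set S : Finset (Fin n) := Finset.univ.image σ with hSdef
  have hS : S.card = l := by
    rw [hSdef, Finset.card_image_of_injective _ hσ, Finset.card_univ, Fintype.card_fin]
  set m := S.orderIsoOfFin hS with hm
  have hmem : ∀ k : Fin l, σ k ∈ S := fun k => Finset.mem_image_of_mem σ (Finset.mem_univ k)
  set ρ : Fin l → Fin l := fun k => m.symm ⟨σ k, hmem k⟩ with hρ
  have hmono : StrictMono (fun j : Fin l => ((m j : S) : Fin n)) := by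
    intro i i' h
    exact m.strictMono h
  refine ⟨fun k => ⟨n - l + ρ k, by have := (ρ k).isLt; omega⟩, ?_, ?_, ?_⟩
  · intro k k' h
    have hρinj : ρ k = ρ k' := by
      have := Fin.val_eq_of_eq h
      simp only at this
      exact Fin.ext (by omega)
    have : (⟨σ k, hmem k⟩ : S) = ⟨σ k', hmem k'⟩ := m.symm.injective hρinj
    exact hσ (Subtype.ext_iff.mp this)
  · ext i
    simp only [Set.mem_range, Set.mem_setOf_eq]
    constructor
    · rintro ⟨k, rfl⟩
      simp
    · intro hi
      have hj : i.1 - (n - l) < l := by have := i.isLt; omega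
      obtain ⟨k, -, hk⟩ := Finset.mem_image.mp (m ⟨i.1 - (n - l), hj⟩).2
      refine ⟨k, ?_⟩
      have : ρ k = ⟨i.1 - (n - l), hj⟩ := by
        rw [hρ]
        apply m.symm_apply_eq.mpr
        exact Subtype.ext hk
      simp only [this]
      exact Fin.ext (by simp; omega)
  · apply Finset.sum_le_sum
    intro k _
    apply hr_anti
    apply sub_le_sub_left
    apply ha
    have h1 : ((m (ρ k) : S) : Fin n) = σ k := by
      simp only [hρ, OrderIso.apply_symm_apply]
    have h2 := fin_strictMono_apply_le hmono (ρ k)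
    rw [h1] at h2
    exact h2
end

section
/- Let r : ℝ → ℝ be concave, let b : Fin l → ℝ be monotone arrival times, and let s : Fin l → ℝ be strictly monotone service times with b i ≤ s k for all i, k. Then for every permutation π of Fin l, ∑_{k} r (s k − b (π k)) ≤ ∑_{k} r (s k − b k). That is, among all ways to match a fixed set of l requests to l service slots, matching them in order of arrival (earliest-arrived request to earliest slot) maximizes the cumulative reward. -/
/-!
By concavity of `r`, the reward `(k, m) ↦ r (s k - b m)` is supermodular on `Fin l × Fin l`.
For a supermodular weight the identity is an optimal assignment: composing `π` with the
transposition that fixes the least point it moves never lowers the total and shrinks the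
support, so induction on the support size reaches the identity.
-/

open Finset Equiv

/-- The middle points `t₁ - a₁`, `t₂ - a₂` are convex combinations of the extreme points
`t₁ - a₂`, `t₂ - a₁` with swapped weights `μ, θ` and `θ, μ`. -/
theorem ConcaveOn.map_sub_add_map_sub_le {r : ℝ → ℝ} (hr : ConcaveOn ℝ Set.univ r)
    {t₁ t₂ a₁ a₂ : ℝ} (ht : t₁ ≤ t₂) (ha : a₁ ≤ a₂) :
    r (t₁ - a₂) + r (t₂ - a₁) ≤ r (t₁ - a₁) + r (t₂ - a₂) := by
  obtain hpq | hpq := (add_nonneg (sub_nonneg.2 ha) (sub_nonneg.2 ht)).eq_or_lt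
  · have ha' : a₁ = a₂ := by linarith
    have ht' : t₁ = t₂ := by linarith
    subst ha' ht'
    rfl
  set θ := (a₂ - a₁) / (a₂ - a₁ + (t₂ - t₁))
  set μ := (t₂ - t₁) / (a₂ - a₁ + (t₂ - t₁))
  have hθ : 0 ≤ θ := div_nonneg (sub_nonneg.2 ha) hpq.le
  have hμ : 0 ≤ μ := div_nonneg (sub_nonneg.2 ht) hpq.le
  have hθμ : θ + μ = 1 := by rw [← add_div, div_self hpq.ne']
  have h₁ := hr.2 (Set.mem_univ (t₁ - a₂)) (Set.mem_univ (t₂ - a₁)) hμ hθ (by linarith)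
  have h₂ := hr.2 (Set.mem_univ (t₁ - a₂)) (Set.mem_univ (t₂ - a₁)) hθ hμ hθμ
  have e₁ : μ • (t₁ - a₂) + θ • (t₂ - a₁) = t₁ - a₁ := by
    simp only [smul_eq_mul, μ, θ]; field_simp; ring
  have e₂ : θ • (t₁ - a₂) + μ • (t₂ - a₁) = t₂ - a₂ := by
    simp only [smul_eq_mul, μ, θ]; field_simp; ring
  rw [e₁] at h₁
  rw [e₂] at h₂
  simp only [smul_eq_mul] at h₁ h₂
  linear_combination h₁ + h₂ - (r (t₁ - a₂) + r (t₂ - a₁)) * hθμ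

section Assignment

variable {ι β : Type*} [Fintype ι] [LinearOrder ι]
  [AddCommGroup β] [PartialOrder β] [IsOrderedAddMonoid β] {f : ι → ι → β}

theorem sum_apply_perm_le_sum_swap_mul
    (hf : ∀ ⦃i j i' j'⦄, i ≤ j → i' ≤ j' → f i j' + f j i' ≤ f i i' + f j j')
    (π : Perm ι) {i : ι} (hi : π i ≠ i) (hmin : ∀ k ∈ π.support, i ≤ k) :
    ∑ k, f k (π k) ≤ ∑ k, f k ((swap i (π i) * π) k) := by
  set j := π⁻¹ i
  have hπj : π j = i := π.apply_symm_apply i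
  have hji : j ≠ i := fun h => hi (h ▸ hπj)
  have hij : i ≤ j := hmin j (Perm.mem_support.2 (hπj ▸ hji.symm))
  have hiπi : i ≤ π i := hmin (π i) (Perm.apply_mem_support.2 (Perm.mem_support.2 hi))
  have hdiff : ∑ k, (f k ((swap i (π i) * π) k) - f k (π k)) =
      (f i i - f i (π i)) + (f j (π i) - f j i) := by
    rw [Fintype.sum_eq_add i j hji.symm]
    · simp [hπj]
    · rintro k ⟨hki, hkj⟩
      have hπk : π k ≠ i := fun h => hkj (π.injective (h.trans hπj.symm))
      simp [swap_apply_of_ne_of_ne hπk (π.injective.ne hki)]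
  rw [← sub_nonneg, ← sum_sub_distrib, hdiff]
  exact (sub_nonneg.2 (hf hij hiπi)).trans_eq (by abel)

/-- The hypothesis `hf` is supermodularity of `f` on `ι × ι` with the product order. -/
theorem sum_apply_perm_le_sum_diag
    (hf : ∀ ⦃i j i' j'⦄, i ≤ j → i' ≤ j' → f i j' + f j i' ≤ f i i' + f j j')
    (π : Perm ι) :
    ∑ k, f k (π k) ≤ ∑ k, f k k := by
  induction h : π.support.card using Nat.strong_induction_on generalizing π with
  | _ n ih =>
    obtain rfl | hπ := eq_or_ne π 1
    · rfl
    have hne : π.support.Nonempty := Finset.nonempty_iff_ne_empty.2 (by simpa using hπ)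
    set i := π.support.min' hne
    have hi : π i ≠ i := Perm.mem_support.1 (π.support.min'_mem hne)
    calc ∑ k, f k (π k) ≤ ∑ k, f k ((swap i (π i) * π) k) :=
          sum_apply_perm_le_sum_swap_mul hf π hi fun k hk => π.support.min'_le k hk
      _ ≤ ∑ k, f k k := ih _ (h ▸ Perm.card_support_swap_mul hi) _ rfl

end Assignment

theorem serving_in_order_optimal_general
    (l : ℕ)
    (r : ℝ → ℝ) (hr : ConcaveOn ℝ Set.univ r)
    (b : Fin l → ℝ) (hb : Monotone b)
    (s : Fin l → ℝ) (hs : StrictMono s)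
    (π : Equiv.Perm (Fin l)) :
    ∑ k : Fin l, r (s k - b (π k)) ≤ ∑ k : Fin l, r (s k - b k) :=
  sum_apply_perm_le_sum_diag (f := fun k m => r (s k - b m))
    (fun _ _ _ _ hij hij' => hr.map_sub_add_map_sub_le (hs.monotone hij) (hb hij')) π

/-- In-order serving is optimal (Appendix B.1): with a concave reward function
`r`, monotone arrival times `b : Fin l → ℝ`, strictly increasing service times
`s : Fin l → ℝ`, and every arrival preceding every service time, matching
requests to slots in order of arrival maximizes the cumulative reward over all
permutations `π` of `Fin l`. -/
theorem serving_in_order_optimal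
    (l : ℕ)
    (r : ℝ → ℝ) (hr : ConcaveOn ℝ Set.univ r)
    (b : Fin l → ℝ) (hb : Monotone b)
    (s : Fin l → ℝ) (hs : StrictMono s)
    (hbs : ∀ (i : Fin l) (k : Fin l), b i ≤ s k)
    (π : Equiv.Perm (Fin l)) :
    ∑ k : Fin l, r (s k - b (π k)) ≤ ∑ k : Fin l, r (s k - b k) :=
  serving_in_order_optimal_general l r hr b hb s hs π
end
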